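/- Let μ be a weight measure over a finite alphabet Σ with values in a linearly ordered cancellative commutative monoid A and let w ∈ Σ*. Then w is μ-prefix normal if and only if for all a, b ∈ A with 1 ≤ a, 1 ≤ b and a·b ≤ μ(w), one has maxpos_{w,μ}(a) + minpos_{w,μ}(b) ≤ minpos_{w,μ}(a·b), where maxpos_{w,μ}(x) = max{ k ∈ {0,…,|w|} : p_{w,μ}(k) ≤ x } and minpos_{w,μ}(x) = min{ k ∈ {0,…,|w|} : p_{w,μ}(k) ≥ x }. -/

import Mathlib

/-- The weight of a word: the product of the weights of its letters. -/
def weight {α A : Type*} [CommMonoid A] [LinearOrder A] [IsOrderedCancelMonoid A] (μ : α → A) (w : List α) : A :=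
  (w.map μ).prod

/-- The factor-weight function: `factorWeight μ w i` is the maximum weight of a
length-`i` factor (contiguous subword) of `w`. -/
def factorWeight {α A : Type*} [CommMonoid A] [LinearOrder A] [IsOrderedCancelMonoid A] (μ : α → A)
    (w : List α) (i : ℕ) : A :=
  ((List.range (w.length + 1 - i)).map fun j => weight μ ((w.drop j).take i)).foldr max 1

/-- A word is `μ`-prefix normal if its factor-weight function agrees with its
prefix-weight function. -/
def PrefixNormal {α A : Type*} [CommMonoid A] [LinearOrder A] [IsOrderedCancelMonoid A] (μ : α → A)
    (w : List α) : Prop :=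
  ∀ i ≤ w.length, factorWeight μ w i = weight μ (w.take i)

/-- A weight measure is gapfree if for every word `w` and every `1 ≤ i ≤ |w|` there is a
letter `a` with `f_{w,μ}(i) = f_{w,μ}(i-1) * μ a`. -/
def Gapfree {α A : Type*} [CommMonoid A] [LinearOrder A] [IsOrderedCancelMonoid A] (μ : α → A) : Prop :=
  ∀ w : List α, ∀ i, 1 ≤ i → i ≤ w.length →
    ∃ a : α, factorWeight μ w i = factorWeight μ w (i - 1) * μ a

/-- `pnClass μ w` is the set `P_μ(w)` of words that are factor-weight equivalent to `w`
and `μ`-prefix normal. -/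
def pnClass {α A : Type*} [CommMonoid A] [LinearOrder A] [IsOrderedCancelMonoid A] (μ : α → A)
    (w : List α) : Set (List α) :=
  {v | (∀ i, factorWeight μ v i = factorWeight μ w i) ∧ PrefixNormal μ v}

/-- The min-position function: `minpos μ w x = min { k ∈ {0,…,|w|} : p_{w,μ}(k) ≥ x }`. -/
noncomputable def minpos {α A : Type*} [CommMonoid A] [LinearOrder A] [IsOrderedCancelMonoid A] (μ : α → A)
    (w : List α) (x : A) : ℕ :=
  sInf {k | k ≤ w.length ∧ x ≤ weight μ (w.take k)}

/-- The max-position function: `maxpos μ w x = max { k ∈ {0,…,|w|} : p_{w,μ}(k) ≤ x }`. -/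
noncomputable def maxpos {α A : Type*} [CommMonoid A] [LinearOrder A] [IsOrderedCancelMonoid A] (μ : α → A)
    (w : List α) (x : A) : ℕ :=
  sSup {k | k ≤ w.length ∧ weight μ (w.take k) ≤ x}

/-
Since every letter weighs more than `1`, the prefix weights `p(k) = μ(w[0,k))` increase strictly
with `k`. Prefix normality says that every factor `w[j, j+i)` weighs at most `p(i)`. Given such a
factor, put `a = p(j)` and let `b` be its weight: then `j ≤ maxpos a` and `minpos (a * b) ≤ j + i`,
so the inequality forces `minpos b ≤ i`, i.e. `b ≤ p(i)`. Conversely, with `m = maxpos a` and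
`n = minpos (a * b)` we have `m ≤ n`, and the factor `w[m, n)` weighs at least `b` because
`p(m) ≤ a`; prefix normality bounds its weight by `p(n - m)`, whence `minpos b ≤ n - m`.
-/

theorem List.foldr_max_le {α : Type*} [LinearOrder α] {l : List α} {b c : α} (hb : b ≤ c)
    (h : ∀ x ∈ l, x ≤ c) : l.foldr max b ≤ c := by
  induction l with
  | nil => exact hb
  | cons y t ih =>
    exact max_le (h y List.mem_cons_self) (ih fun x hx => h x (List.mem_cons_of_mem _ hx))

section Weight

variable {α A : Type*} [CommMonoid A] [LinearOrder A] [IsOrderedCancelMonoid A] (μ : α → A)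

theorem weight_append (u v : List α) : weight μ (u ++ v) = weight μ u * weight μ v := by
  simp [weight]

theorem one_le_weight (hμ : ∀ a, 1 ≤ μ a) (u : List α) : 1 ≤ weight μ u :=
  List.one_le_prod_of_one_le (List.forall_mem_map.2 fun a _ => hμ a)

theorem one_lt_weight (hμ : ∀ a, 1 < μ a) {u : List α} (hu : u ≠ []) : 1 < weight μ u :=
  List.one_lt_prod_of_one_lt _ (List.forall_mem_map.2 fun a _ => hμ a) (by simpa using hu)

variable (w : List α)

theorem weight_take_eq_mul {k l : ℕ} (h : k ≤ l) :
    weight μ (w.take l) = weight μ (w.take k) * weight μ ((w.drop k).take (l - k)) := by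
  rw [← weight_append, ← List.take_add, Nat.add_sub_cancel' h]

theorem weight_take_mono (hμ : ∀ a, 1 ≤ μ a) : Monotone fun k => weight μ (w.take k) :=
  fun _ _ h =>
    (weight_take_eq_mul μ w h).ge.trans' (le_mul_of_one_le_right' (one_le_weight μ hμ _))

theorem weight_take_le_weight (hμ : ∀ a, 1 ≤ μ a) (k : ℕ) :
    weight μ (w.take k) ≤ weight μ w := by
  simpa [List.take_of_length_le (le_max_right k w.length)] using
    weight_take_mono μ w hμ (le_max_left k w.length)

theorem weight_take_strictMonoOn (hμ : ∀ a, 1 < μ a) :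
    StrictMonoOn (fun k => weight μ (w.take k)) (Set.Iic w.length) := by
  intro k _ l hl hkl
  have hne : (w.drop k).take (l - k) ≠ [] := by
    simp only [ne_eq, List.take_eq_nil_iff, List.drop_eq_nil_iff, not_or, not_le]
    exact ⟨by omega, by simp only [Set.mem_Iic] at hl; omega⟩
  show weight μ (w.take k) < weight μ (w.take l)
  rw [weight_take_eq_mul μ w hkl.le]
  exact lt_mul_of_one_lt_right' _ (one_lt_weight μ hμ hne)

theorem weight_factor_le_factorWeight {i j : ℕ} (h : j + i ≤ w.length) :
    weight μ ((w.drop j).take i) ≤ factorWeight μ w i :=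
  List.le_max_of_le' 1 (List.mem_map.2 ⟨j, List.mem_range.2 (by omega), rfl⟩) le_rfl

theorem factorWeight_le {i : ℕ} {c : A} (hc : 1 ≤ c)
    (h : ∀ j, j + i ≤ w.length → weight μ ((w.drop j).take i) ≤ c) :
    factorWeight μ w i ≤ c := by
  refine List.foldr_max_le hc ?_
  simp only [List.mem_map, List.mem_range, forall_exists_index, and_imp]
  rintro _ j hj rfl
  exact h j (by omega)

theorem prefixNormal_iff_weight_factor_le (hμ : ∀ a, 1 ≤ μ a) :
    PrefixNormal μ w ↔
      ∀ i j, j + i ≤ w.length → weight μ ((w.drop j).take i) ≤ weight μ (w.take i) := by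
  refine ⟨fun hpn i j h => ?_, fun h i hi => ?_⟩
  · exact hpn i (by omega) ▸ weight_factor_le_factorWeight μ w h
  · refine (factorWeight_le μ w (one_le_weight μ hμ _) (h i)).antisymm ?_
    simpa using weight_factor_le_factorWeight μ w (j := 0) (by omega)

end Weight

section Positions

variable {α A : Type*} [CommMonoid A] [LinearOrder A] [IsOrderedCancelMonoid A] (μ : α → A)
  (w : List α)

theorem le_maxpos {k : ℕ} {x : A} (hk : k ≤ w.length) (h : weight μ (w.take k) ≤ x) :
    k ≤ maxpos μ w x :=
  le_csSup ⟨w.length, fun _ hk => hk.1⟩ ⟨hk, h⟩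

theorem maxpos_mem {x : A} (hx : 1 ≤ x) :
    maxpos μ w x ≤ w.length ∧ weight μ (w.take (maxpos μ w x)) ≤ x :=
  Nat.sSup_mem (s := {k | k ≤ w.length ∧ weight μ (w.take k) ≤ x})
    ⟨0, Nat.zero_le _, by simpa [weight] using hx⟩ ⟨w.length, fun _ hk => hk.1⟩

theorem minpos_le {k : ℕ} {x : A} (hk : k ≤ w.length) (h : x ≤ weight μ (w.take k)) :
    minpos μ w x ≤ k :=
  Nat.sInf_le ⟨hk, h⟩

theorem minpos_mem {x : A} (hx : x ≤ weight μ w) :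
    minpos μ w x ≤ w.length ∧ x ≤ weight μ (w.take (minpos μ w x)) :=
  Nat.sInf_mem (s := {k | k ≤ w.length ∧ x ≤ weight μ (w.take k)})
    ⟨w.length, le_rfl, by simpa using hx⟩

end Positions

section PrefixNormal

variable {α A : Type*} [CommMonoid A] [LinearOrder A] [IsOrderedCancelMonoid A] {μ : α → A}
  {w : List α}

theorem maxpos_add_minpos_le_minpos_mul (hμ : ∀ a, 1 < μ a)
    (hw : ∀ i j, j + i ≤ w.length → weight μ ((w.drop j).take i) ≤ weight μ (w.take i))
    {a b : A} (ha : 1 ≤ a) (hb : 1 ≤ b) (hab : a * b ≤ weight μ w) :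
    maxpos μ w a + minpos μ w b ≤ minpos μ w (a * b) := by
  set m := maxpos μ w a
  set n := minpos μ w (a * b)
  obtain ⟨hm, hpm⟩ := maxpos_mem μ w ha
  obtain ⟨hn, hpn⟩ := minpos_mem μ w hab
  have hmn : m ≤ n := by
    by_contra! hnm
    have := weight_take_strictMonoOn μ w hμ (Set.mem_Iic.2 hn) (Set.mem_Iic.2 hm) hnm
    exact (hpn.trans_lt this |>.trans_le hpm).not_ge (le_mul_of_one_le_right' hb)
  have hb_le : b ≤ weight μ ((w.drop m).take (n - m)) := by
    rw [weight_take_eq_mul μ w hmn] at hpn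
    exact le_of_mul_le_mul_left' (hpn.trans (mul_le_mul_left hpm _))
  have : minpos μ w b ≤ n - m := minpos_le μ w (by omega) (hb_le.trans (hw _ _ (by omega)))
  omega

theorem weight_factor_le_of_maxpos_add_minpos_le (hμ : ∀ a, 1 ≤ μ a)
    (hw : ∀ a b : A, 1 ≤ a → 1 ≤ b → a * b ≤ weight μ w →
      maxpos μ w a + minpos μ w b ≤ minpos μ w (a * b))
    {i j : ℕ} (hji : j + i ≤ w.length) :
    weight μ ((w.drop j).take i) ≤ weight μ (w.take i) := by
  set a := weight μ (w.take j)
  set b := weight μ ((w.drop j).take i)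
  have hab : weight μ (w.take (j + i)) = a * b := by
    rw [weight_take_eq_mul μ w (Nat.le_add_right j i), Nat.add_sub_cancel_left]
  have habw : a * b ≤ weight μ w := hab ▸ weight_take_le_weight μ w hμ _
  have hj : j ≤ maxpos μ w a := le_maxpos μ w (by omega) le_rfl
  have hji' : minpos μ w (a * b) ≤ j + i := minpos_le μ w hji hab.ge
  have hbi : minpos μ w b ≤ i := by
    have := hw a b (one_le_weight μ hμ _) (one_le_weight μ hμ _) habw
    omega
  calc b ≤ weight μ (w.take (minpos μ w b)) :=
        (minpos_mem μ w ((le_mul_of_one_le_left' (one_le_weight μ hμ _)).trans habw)).2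
    _ ≤ weight μ (w.take i) := weight_take_mono μ w hμ hbi

end PrefixNormal

theorem prefixNormal_iff_maxpos_minpos_general {α A : Type*}
    [CommMonoid A] [LinearOrder A] [IsOrderedCancelMonoid A] (μ : α → A) (hμ : ∀ a : α, 1 < μ a)
    (w : List α) :
    PrefixNormal μ w ↔
      ∀ a b : A, 1 ≤ a → 1 ≤ b → a * b ≤ weight μ w →
        maxpos μ w a + minpos μ w b ≤ minpos μ w (a * b) := by
  have hμ' : ∀ a, 1 ≤ μ a := fun a => (hμ a).le
  rw [prefixNormal_iff_weight_factor_le μ w hμ']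
  exact ⟨fun h _ _ => maxpos_add_minpos_le_minpos_mul hμ h,
    fun h _ _ => weight_factor_le_of_maxpos_add_minpos_le hμ' h⟩

/-- A word is `μ`-prefix normal iff for all `a, b ∈ A` with `1 ≤ a`, `1 ≤ b` and
`a * b ≤ μ(w)` one has `maxpos_{w,μ}(a) + minpos_{w,μ}(b) ≤ minpos_{w,μ}(a * b)`. -/
theorem prefixNormal_iff_maxpos_minpos {α A : Type*} [Fintype α]
    [CommMonoid A] [LinearOrder A] [IsOrderedCancelMonoid A] (μ : α → A) (hμ : ∀ a : α, 1 < μ a)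
    (w : List α) :
    PrefixNormal μ w ↔
      ∀ a b : A, 1 ≤ a → 1 ≤ b → a * b ≤ weight μ w →
        maxpos μ w a + minpos μ w b ≤ minpos μ w (a * b) :=
  prefixNormal_iff_maxpos_minpos_general μ hμ w
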